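/- Fix α ∈ (0,1), μ₀ > 0, t > 0, and unit vectors w₁, w ∈ ℝ^d with θ(w₁, w) ≤ 6.5·t. Let η be the constructed label function η(x) = 1/2 + sgn(⟨w,x⟩)·℘(|φ(x,w)|) if |φ(x,w₁)| ≤ 6.5·t, and η(x) = 1/2 + sgn(⟨w₁,x⟩)·℘(|φ(x,w₁)|) if |φ(x,w₁)| > 6.5·t. Then for every nonzero x ∈ ℝ^d, sgn(η(x) − 1/2) = sgn(⟨w, x⟩); that is, x ↦ sgn(⟨w,x⟩) is the Bayes classifier for η. -/
import Mathlib

open scoped RealInnerProductSpace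

/-- arccos is antitone. -/
lemma arccos_anti {a b : ℝ} (h : a ≤ b) : Real.arccos b ≤ Real.arccos a := by
  unfold Real.arccos
  have := Real.monotone_arcsin h
  linarith

/-- Triangle inequality for angles, unit-vector middle version. -/
lemma angle_triangle_unit {V : Type*} [NormedAddCommGroup V] [InnerProductSpace ℝ V]
    (x y z : V) (hx : ‖x‖ = 1) (hy : ‖y‖ = 1) (hz : ‖z‖ = 1) :
    InnerProductGeometry.angle x z ≤
      InnerProductGeometry.angle x y + InnerProductGeometry.angle y z := by
  set a := InnerProductGeometry.angle x y with ha
  set b := InnerProductGeometry.angle y z with hb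
  by_cases hab : a + b ≤ Real.pi
  · have ha0 : 0 ≤ a := InnerProductGeometry.angle_nonneg x y
    have hb0 : 0 ≤ b := InnerProductGeometry.angle_nonneg y z
    have haπ : a ≤ Real.pi := InnerProductGeometry.angle_le_pi x y
    have hbπ : b ≤ Real.pi := InnerProductGeometry.angle_le_pi y z
    have hxy : ⟪x, y⟫ = Real.cos a := by
      rw [ha, InnerProductGeometry.cos_angle, hx, hy]; ring
    have hyz : ⟪y, z⟫ = Real.cos b := by
      rw [hb, InnerProductGeometry.cos_angle, hy, hz]; ring
    set xp := x - ⟪x, y⟫ • y with hxp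
    set zp := z - ⟪z, y⟫ • y with hzp
    have hyy : ⟪y, y⟫ = 1 := by
      rw [real_inner_self_eq_norm_sq, hy]; norm_num
    have hxx : ⟪x, x⟫ = 1 := by rw [real_inner_self_eq_norm_sq, hx]; norm_num
    have hzz : ⟪z, z⟫ = 1 := by rw [real_inner_self_eq_norm_sq, hz]; norm_num
    have hyx : ⟪y, x⟫ = Real.cos a := by rw [real_inner_comm]; exact hxy
    have hzy : ⟪z, y⟫ = Real.cos b := by rw [real_inner_comm]; exact hyz
    have h1 : ⟪xp, zp⟫ = ⟪x, z⟫ - Real.cos a * Real.cos b := by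
      simp only [hxp, hzp, inner_sub_left, inner_sub_right, real_inner_smul_left,
        real_inner_smul_right, hyy, hxy, hyx, hyz, hzy]
      ring
    have hnxp : ‖xp‖ = Real.sin a := by
      have h2 : ‖xp‖ ^ 2 = Real.sin a ^ 2 := by
        rw [← real_inner_self_eq_norm_sq]
        simp only [hxp, inner_sub_left, inner_sub_right, real_inner_smul_left,
          real_inner_smul_right, hyy, hxx, hxy, hyx]
        rw [Real.sin_sq]; ring
      have hs : 0 ≤ Real.sin a := Real.sin_nonneg_of_nonneg_of_le_pi ha0 haπ
      nlinarith [norm_nonneg xp]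
    have hnzp : ‖zp‖ = Real.sin b := by
      have h2 : ‖zp‖ ^ 2 = Real.sin b ^ 2 := by
        rw [← real_inner_self_eq_norm_sq]
        simp only [hzp, inner_sub_left, inner_sub_right, real_inner_smul_left,
          real_inner_smul_right, hyy, hzz, hyz, hzy]
        rw [Real.sin_sq]; ring
      have hs : 0 ≤ Real.sin b := Real.sin_nonneg_of_nonneg_of_le_pi hb0 hbπ
      nlinarith [norm_nonneg zp]
    have hCS : -(‖xp‖ * ‖zp‖) ≤ ⟪xp, zp⟫ := by
      have := abs_real_inner_le_norm xp zp
      have := neg_abs_le ⟪xp, zp⟫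
      linarith
    have key : Real.cos (a + b) ≤ ⟪x, z⟫ := by
      rw [Real.cos_add]
      rw [hnxp, hnzp] at hCS
      linarith [h1, hCS]
    have hxz : InnerProductGeometry.angle x z = Real.arccos ⟪x, z⟫ := by
      rw [InnerProductGeometry.angle, hx, hz]; norm_num
    calc InnerProductGeometry.angle x z ≤ Real.arccos (Real.cos (a + b)) := by
          rw [hxz]; exact arccos_anti key
      _ = a + b := Real.arccos_cos (by linarith) hab
  · push_neg at hab
    exact (InnerProductGeometry.angle_le_pi x z).trans hab.le

/-- The signed margin angle `φ(x,w) = π/2 − θ(x,w)`. -/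
noncomputable def phi {d : ℕ} (x w : EuclideanSpace ℝ (Fin d)) : ℝ :=
  Real.pi / 2 - InnerProductGeometry.angle x w

/-- `℘(ϑ) = min{2^{α/(1−α)}·μ₀·ϑ^{α/(1−α)}, 1/2}`. -/
noncomputable def wp (α μ₀ ϑ : ℝ) : ℝ :=
  min ((2 : ℝ) ^ (α / (1 - α)) * μ₀ * ϑ ^ (α / (1 - α))) (1 / 2)

/-- The constructed label function `η`, defined relative to the reference hypothesis `w₁`
and the hypothesis `w`:
`η(x) = 1/2 + sgn(⟨w,x⟩)·℘(|φ(x,w)|)` if `|φ(x,w₁)| ≤ 6.5·t`, and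
`η(x) = 1/2 + sgn(⟨w₁,x⟩)·℘(|φ(x,w₁)|)` otherwise. -/
noncomputable def eta {d : ℕ} (α μ₀ t : ℝ) (w₁ w : EuclideanSpace ℝ (Fin d))
    (x : EuclideanSpace ℝ (Fin d)) : ℝ :=
  if |phi x w₁| ≤ 6.5 * t then 1 / 2 + Real.sign ⟪w, x⟫ * wp α μ₀ |phi x w|
  else 1 / 2 + Real.sign ⟪w₁, x⟫ * wp α μ₀ |phi x w₁|

/-- Sign of inner product vs angle. -/
lemma inner_pos_iff_angle_lt {d : ℕ} (x w : EuclideanSpace ℝ (Fin d)) (hx : x ≠ 0)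
    (hw : ‖w‖ = 1) : 0 < ⟪w, x⟫ ↔ InnerProductGeometry.angle x w < Real.pi / 2 := by
  have hcos : Real.cos (InnerProductGeometry.angle x w) = ⟪x, w⟫ / ‖x‖ := by
    rw [InnerProductGeometry.cos_angle, hw]; ring_nf
  have hxn : (0:ℝ) < ‖x‖ := norm_pos_iff.mpr hx
  rw [real_inner_comm x w]
  constructor
  · intro h
    by_contra hle
    push_neg at hle
    have h2 : Real.cos (InnerProductGeometry.angle x w) ≤ 0 := by
      rcases eq_or_lt_of_le hle with he | hlt
      · rw [← he, Real.cos_pi_div_two]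
      · refine le_of_lt (Real.cos_neg_of_pi_div_two_lt_of_lt hlt ?_)
        have := InnerProductGeometry.angle_le_pi x w
        linarith [Real.pi_pos]
    rw [hcos] at h2
    have := div_pos h hxn
    linarith
  · intro h
    have h2 : 0 < Real.cos (InnerProductGeometry.angle x w) := by
      apply Real.cos_pos_of_mem_Ioo
      constructor
      · linarith [InnerProductGeometry.angle_nonneg x w, Real.pi_pos]
      · exact h
    rw [hcos] at h2
    rcases div_pos_iff.mp h2 with ⟨h3, _⟩ | ⟨_, h4⟩
    · exact h3
    · linarith

lemma inner_neg_iff_angle_gt {d : ℕ} (x w : EuclideanSpace ℝ (Fin d)) (hx : x ≠ 0)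
    (hw : ‖w‖ = 1) : ⟪w, x⟫ < 0 ↔ Real.pi / 2 < InnerProductGeometry.angle x w := by
  have h1 := inner_pos_iff_angle_lt (-x) w (neg_ne_zero.mpr hx) hw
  rw [inner_neg_right, InnerProductGeometry.angle_neg_left] at h1
  constructor
  · intro h
    have := h1.mp (by linarith)
    linarith
  · intro h
    have := h1.mpr (by linarith)
    linarith

lemma inner_zero_iff_angle_eq {d : ℕ} (x w : EuclideanSpace ℝ (Fin d)) (hx : x ≠ 0)
    (hw : ‖w‖ = 1) : ⟪w, x⟫ = 0 ↔ InnerProductGeometry.angle x w = Real.pi / 2 := by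
  constructor
  · intro h
    by_contra hne
    rcases lt_or_gt_of_ne hne with hlt | hgt
    · have := (inner_pos_iff_angle_lt x w hx hw).mpr hlt
      linarith [h ▸ this]
    · have := (inner_neg_iff_angle_gt x w hx hw).mpr hgt
      linarith [h ▸ this]
  · intro h
    by_contra hne
    rcases lt_or_gt_of_ne hne with hlt | hgt
    · have := (inner_neg_iff_angle_gt x w hx hw).mp hlt
      linarith
    · have := (inner_pos_iff_angle_lt x w hx hw).mp hgt
      linarith

/-- `sgn(⟨w,·⟩)` is the Bayes classifier for the constructed label function `η`:
for every nonzero `x`, `sgn(η(x) − 1/2) = sgn(⟨w,x⟩)`. -/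
theorem stmt_10 (d : ℕ) (α μ₀ t : ℝ) (hα : 0 < α) (hα' : α < 1) (hμ : 0 < μ₀) (ht : 0 < t)
    (w₁ w : EuclideanSpace ℝ (Fin d)) (hw₁ : ‖w₁‖ = 1) (hw : ‖w‖ = 1)
    (hangle : InnerProductGeometry.angle w₁ w ≤ 6.5 * t) :
    ∀ x : EuclideanSpace ℝ (Fin d), x ≠ 0 →
      Real.sign (eta α μ₀ t w₁ w x - 1 / 2) = Real.sign ⟪w, x⟫ := by
  intro x hx
  have he : 0 < α / (1 - α) := div_pos hα (by linarith)
  unfold eta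
  by_cases hcase : |phi x w₁| ≤ 6.5 * t
  · rw [if_pos hcase]
    ring_nf
    by_cases hs : ⟪w, x⟫ = 0
    · have hφ : phi x w = 0 := by
        have := (inner_zero_iff_angle_eq x w hx hw).mp hs
        unfold phi; rw [this]; ring
      rw [hφ, hs]
      simp [wp, Real.zero_rpow he.ne']
    · have hφ : phi x w ≠ 0 := by
        intro h
        apply hs
        apply (inner_zero_iff_angle_eq x w hx hw).mpr
        unfold phi at h; linarith
      have hwp : 0 < wp α μ₀ |phi x w| := by
        apply lt_min
        · positivity
        · norm_num
      rcases lt_or_gt_of_ne hs with hneg | hpos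
      · rw [Real.sign_of_neg hneg]
        rw [Real.sign_of_neg (by nlinarith)]
      · rw [Real.sign_of_pos hpos]
        rw [Real.sign_of_pos (by nlinarith)]
  · rw [if_neg hcase]
    push_neg at hcase
    ring_nf
    have htri1 : InnerProductGeometry.angle x w ≤
        InnerProductGeometry.angle x w₁ + InnerProductGeometry.angle w₁ w := by
      have hx1 : ‖(‖x‖⁻¹ • x : EuclideanSpace ℝ (Fin d))‖ = 1 := by
        rw [norm_smul, norm_inv, norm_norm, inv_mul_cancel₀ (norm_ne_zero_iff.mpr hx)]
      have := angle_triangle_unit (‖x‖⁻¹ • x) w₁ w hx1 hw₁ hw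
      rwa [InnerProductGeometry.angle_smul_left_of_pos x w₁
          (inv_pos.mpr (norm_pos_iff.mpr hx)),
        InnerProductGeometry.angle_smul_left_of_pos x w
          (inv_pos.mpr (norm_pos_iff.mpr hx))] at this
    have htri2 : InnerProductGeometry.angle x w₁ ≤
        InnerProductGeometry.angle x w + InnerProductGeometry.angle w₁ w := by
      have hx1 : ‖(‖x‖⁻¹ • x : EuclideanSpace ℝ (Fin d))‖ = 1 := by
        rw [norm_smul, norm_inv, norm_norm, inv_mul_cancel₀ (norm_ne_zero_iff.mpr hx)]
      have := angle_triangle_unit (‖x‖⁻¹ • x) w w₁ hx1 hw hw₁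
      rw [InnerProductGeometry.angle_smul_left_of_pos x w₁
          (inv_pos.mpr (norm_pos_iff.mpr hx)),
        InnerProductGeometry.angle_smul_left_of_pos x w
          (inv_pos.mpr (norm_pos_iff.mpr hx))] at this
      rwa [InnerProductGeometry.angle_comm w w₁] at this
    have hwp : 0 < wp α μ₀ |phi x w₁| := by
      apply lt_min
      · have : (0:ℝ) < |phi x w₁| := by nlinarith
        positivity
      · norm_num
    have hsigneq : Real.sign ⟪w₁, x⟫ = Real.sign ⟪w, x⟫ ∧ ⟪w₁, x⟫ ≠ 0 := by
      rcases lt_abs.mp hcase with hpos | hneg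
      · -- phi x w₁ > 6.5 t : angle x w₁ < π/2 - 6.5t
        have h1 : InnerProductGeometry.angle x w₁ < Real.pi / 2 - 6.5 * t := by
          unfold phi at hpos; linarith
        have h2 : InnerProductGeometry.angle x w < Real.pi / 2 := by linarith
        have hi1 : 0 < ⟪w₁, x⟫ := (inner_pos_iff_angle_lt x w₁ hx hw₁).mpr (by linarith)
        have hi2 : 0 < ⟪w, x⟫ := (inner_pos_iff_angle_lt x w hx hw).mpr h2
        exact ⟨by rw [Real.sign_of_pos hi1, Real.sign_of_pos hi2], hi1.ne'⟩
      · -- phi x w₁ < -6.5 t : angle x w₁ > π/2 + 6.5t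
        have h1 : Real.pi / 2 + 6.5 * t < InnerProductGeometry.angle x w₁ := by
          unfold phi at hneg; linarith
        have h2 : Real.pi / 2 < InnerProductGeometry.angle x w := by linarith
        have hi1 : ⟪w₁, x⟫ < 0 := (inner_neg_iff_angle_gt x w₁ hx hw₁).mpr (by linarith)
        have hi2 : ⟪w, x⟫ < 0 := (inner_neg_iff_angle_gt x w hx hw).mpr h2
        exact ⟨by rw [Real.sign_of_neg hi1, Real.sign_of_neg hi2], hi1.ne⟩
    obtain ⟨hsgn, hne⟩ := hsigneq
    rw [← hsgn]
    rcases lt_or_gt_of_ne hne with hneg | hpos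
    · rw [Real.sign_of_neg hneg, Real.sign_of_neg (by nlinarith)]
    · rw [Real.sign_of_pos hpos, Real.sign_of_pos (by nlinarith)]
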